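/- arXiv:1206.1548 — 4 statements merged into one kernel-verified Lean document; each statement's English description precedes it below -/
import Mathlib

section
/- Let N = p^k · m^2 be an odd perfect number, where p is a prime with p ≡ k ≡ 1 (mod 4) and gcd(p, m) = 1. Then 8/5 < σ(m^2)/m^2 < 2. -/
/-!
Multiplicativity of `σ` turns `σ(N) = 2N` into `σ(m²)/m² = 2 / (σ(pᵏ)/pᵏ)`, so it suffices to
see `1 < σ(pᵏ)/pᵏ < 5/4`. The lower bound holds for every `n > 1`; the upper one follows from
the geometric sum `σ(pᵏ)/pᵏ < p/(p-1)`, together with `p ≥ 5` for a prime `p ≡ 1 (mod 4)`.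
-/

open ArithmeticFunction
open scoped ArithmeticFunction.sigma

theorem lt_sigma_one {n : ℕ} (hn : 1 < n) : n < σ 1 n := by
  rw [sigma_one_apply, Nat.sum_divisors_eq_sum_properDivisors_add_self]
  have h1 : 1 ≤ ∑ d ∈ n.properDivisors, d :=
    Finset.single_le_sum (f := id) (fun _ _ ↦ Nat.zero_le _)
      (Nat.one_mem_properDivisors_iff_one_lt.mpr hn)
  omega

theorem sigma_one_prime_pow_div_lt {p : ℕ} (hp : p.Prime) (k : ℕ) :
    (σ 1 (p ^ k) : ℚ) / p ^ k < p / (p - 1) := by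
  have hp1 : (1 : ℚ) < p := by exact_mod_cast hp.one_lt
  have hgeom : (σ 1 (p ^ k) : ℚ) * (p - 1) = p ^ (k + 1) - 1 := by
    rw [sigma_one_apply_prime_pow hp]
    push_cast
    exact geom_sum_mul (p : ℚ) (k + 1)
  rw [div_lt_div_iff₀ (by positivity) (by linarith), hgeom, pow_succ]
  linarith

theorem sigma_one_div_eq_two_div_of_perfect {a b : ℕ} (hab : a.Coprime b) (h : (a * b).Perfect) :
    (σ 1 b : ℚ) / b = 2 / ((σ 1 a : ℚ) / a) := by
  have ha : 0 < a := Nat.pos_of_mul_pos_right h.2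
  have hb : 0 < b := Nat.pos_of_mul_pos_left h.2
  have hσ : σ 1 a * σ 1 b = 2 * (a * b) := by
    rw [← isMultiplicative_sigma.map_mul_of_coprime hab, sigma_one_apply]
    exact (Nat.perfect_iff_sum_divisors_eq_two_mul h.2).mp h
  have hσa : 0 < σ 1 a := sigma_pos 1 a ha.ne'
  have hσ' : (σ 1 a : ℚ) * σ 1 b = 2 * (a * b) := by exact_mod_cast hσ
  field_simp
  linarith

theorem stmt_2_general (p k m : ℕ) (hp : p.Prime) (hp4 : p % 4 = 1) (hk4 : k % 4 = 1)
    (hcop : Nat.Coprime p m)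
    (hperf : Nat.Perfect (p ^ k * m ^ 2)) :
    8 / 5 < (ArithmeticFunction.sigma 1 (m ^ 2) : ℚ) / (m ^ 2 : ℚ) ∧
      (ArithmeticFunction.sigma 1 (m ^ 2) : ℚ) / (m ^ 2 : ℚ) < 2 := by
  have hp5 : (5 : ℚ) ≤ p := by have := hp.two_le; exact_mod_cast (by omega : 5 ≤ p)
  have hpk : 1 < p ^ k := Nat.one_lt_pow (by omega) hp.one_lt
  have hI_gt : 1 < (σ 1 (p ^ k) : ℚ) / (p : ℚ) ^ k := by
    rw [one_lt_div (by positivity)]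
    exact_mod_cast lt_sigma_one hpk
  have hI_lt : (σ 1 (p ^ k) : ℚ) / (p : ℚ) ^ k < 5 / 4 := by
    refine (sigma_one_prime_pow_div_lt hp k).trans_le ?_
    rw [div_le_div_iff₀ (by linarith) (by norm_num)]
    linarith
  have hratio := sigma_one_div_eq_two_div_of_perfect (hcop.pow k 2) hperf
  push_cast at hratio
  rw [hratio]
  constructor
  · calc (8 / 5 : ℚ) = 2 / (5 / 4) := by norm_num
      _ < _ := div_lt_div_of_pos_left two_pos (by linarith) hI_lt
  · calc _ < (2 : ℚ) / 1 := div_lt_div_of_pos_left two_pos one_pos hI_gt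
      _ = 2 := div_one 2

theorem stmt_2 (p k m : ℕ) (hp : p.Prime) (hp4 : p % 4 = 1) (hk4 : k % 4 = 1)
    (hcop : Nat.Coprime p m) (hodd : Odd (p ^ k * m ^ 2))
    (hperf : Nat.Perfect (p ^ k * m ^ 2)) :
    8 / 5 < (ArithmeticFunction.sigma 1 (m ^ 2) : ℚ) / (m ^ 2 : ℚ) ∧
      (ArithmeticFunction.sigma 1 (m ^ 2) : ℚ) / (m ^ 2 : ℚ) < 2 :=
  stmt_2_general p k m hp hp4 hk4 hcop hperf
end

section
/- Let N = p^k · m^2 be an odd perfect number, where p is a prime with p ≡ k ≡ 1 (mod 4) and gcd(p, m) = 1. Then σ(p^k)/m^2 + σ(m^2)/p^k ≥ 11/3. -/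
/-!
Since `p ^ k` is coprime to `σ(p ^ k) ≡ 1 (mod p)`, perfection `σ(p ^ k) σ(m ^ 2) = 2 p ^ k m ^ 2`
forces `σ(m ^ 2) = p ^ k d` and `σ(p ^ k) d = 2 m ^ 2` for some `d`, and the quantity in question is
`2 / d + d`. As `σ(p ^ k) ≡ k + 1 (mod 2)` is even and `m` is odd, `d` is odd, and `x ↦ 2 / x + x`
increases for `x ≥ 3`, so everything comes down to excluding `d = 1`
(Dandapat–Hunsucker–Pomerance). If `d = 1`, write `k = 2g + 1`.
For `g = 0` we get `σ(m ^ 2) = p` and `p + 1 = 2 m ^ 2`; a prime value of `σ` forces `m ^ 2 = q ^ e`,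
and then `σ(q ^ e) ≡ 1 (mod q)` gives `q ∣ 2`, contradicting that `m` is odd.
For `g ≥ 1`, `σ(p ^ k) = S (p ^ (g + 1) + 1)` with `S = 1 + p + ⋯ + p ^ g`, so `m ^ 2 = S B` with
`2B = p ^ (g + 1) + 1` and `gcd(S, B) = 1`. Then `σ(S) σ(B) = σ(m ^ 2) = p ^ k`, so `σ(S)` and `σ(B)`
are powers of `p`, each exceeding `p ^ g`; their product is at least `p ^ (2g + 2) > p ^ k`.
-/

section

open ArithmeticFunction Finset
open scoped ArithmeticFunction.sigma

theorem le_sigma_one {n : ℕ} (hn : n ≠ 0) : n ≤ σ 1 n := by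
  rw [sigma_one_apply]
  exact single_le_sum (f := fun d ↦ d) (fun _ _ ↦ Nat.zero_le _) (Nat.mem_divisors_self n hn)

theorem sigma_one_prime_pow_modEq {p q : ℕ} (hp : p.Prime) (hpq : p ≡ 1 [MOD q]) (k : ℕ) :
    σ 1 (p ^ k) ≡ k + 1 [MOD q] := by
  rw [sigma_one_apply_prime_pow hp]
  calc ∑ i ∈ range (k + 1), p ^ i ≡ ∑ _i ∈ range (k + 1), 1 [MOD q] :=
        Nat.ModEq.sum fun i _ ↦ by simpa using hpq.pow i
    _ = k + 1 := by simp

theorem sigma_one_prime_pow_modEq_one {p : ℕ} (hp : p.Prime) (k : ℕ) :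
    σ 1 (p ^ k) ≡ 1 [MOD p] := by
  rw [sigma_one_apply_prime_pow hp, sum_range_succ', pow_zero]
  have hmul : ∑ i ∈ range k, p ^ (i + 1) ≡ 0 [MOD p] :=
    Nat.ModEq.sum_zero fun i _ ↦ Nat.modEq_zero_iff_dvd.mpr (dvd_pow_self p i.succ_ne_zero)
  simpa using hmul.add_right 1

theorem even_sigma_one_prime_pow {p k : ℕ} (hp : p.Prime) (hp_odd : Odd p) (hk : Odd k) :
    Even (σ 1 (p ^ k)) := by
  have h := sigma_one_prime_pow_modEq hp (q := 2) (Nat.odd_iff.mp hp_odd) k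
  unfold Nat.ModEq at h
  rw [Nat.even_iff, h]
  exact Nat.even_iff.mp hk.add_one

theorem coprime_sigma_one_prime_pow {p : ℕ} (hp : p.Prime) (k : ℕ) :
    Nat.Coprime p (σ 1 (p ^ k)) := by
  rw [Nat.coprime_comm, Nat.Coprime, (sigma_one_prime_pow_modEq_one hp k).gcd_eq, Nat.gcd_one_left]

theorem isPrimePow_of_prime_sigma_one {n : ℕ} (h : (σ 1 n).Prime) : IsPrimePow n := by
  have hn0 : n ≠ 0 := by rintro rfl; simp [Nat.not_prime_zero] at h
  have hn1 : n ≠ 1 := by rintro rfl; simp [Nat.not_prime_one] at h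
  have hq : n.minFac.Prime := Nat.minFac_prime hn1
  have he : 0 < n.factorization n.minFac := hq.factorization_pos_of_dvd hn0 (Nat.minFac_dvd n)
  refine (exists_ordCompl_eq_one_iff_isPrimePow hn1).mpr ⟨n.minFac, hq, ?_⟩
  rw [← Nat.ordProj_mul_ordCompl_eq_self n n.minFac,
    isMultiplicative_sigma.map_mul_of_coprime ((Nat.coprime_ordCompl hq hn0).pow_left _)] at h
  rcases Nat.prime_mul_iff.mp h with ⟨-, h1⟩ | ⟨-, h1⟩
  · exact (sigma_eq_one_iff 1 _).mp h1
  · exact absurd ((sigma_eq_one_iff 1 _).mp h1) (Nat.one_lt_pow he.ne' hq.one_lt).ne'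

theorem sigma_one_add_one_ne_two_mul {n : ℕ} (hn : Odd n) (hσ : (σ 1 n).Prime) :
    σ 1 n + 1 ≠ 2 * n := by
  obtain ⟨q, e, hq, he, rfl⟩ := (isPrimePow_nat_iff n).mp (isPrimePow_of_prime_sigma_one hσ)
  intro h
  have h2 : 2 ≡ 0 [MOD q] :=
    calc 2 ≡ σ 1 (q ^ e) + 1 [MOD q] := ((sigma_one_prime_pow_modEq_one hq e).add_right 1).symm
      _ = 2 * q ^ e := h
      _ ≡ 0 [MOD q] := Nat.modEq_zero_iff_dvd.mpr (dvd_mul_of_dvd_right (dvd_pow_self q he.ne') 2)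
  obtain rfl : q = 2 :=
    (Nat.prime_dvd_prime_iff_eq hq Nat.prime_two).mp (Nat.modEq_zero_iff_dvd.mp h2)
  exact Nat.not_even_iff_odd.mpr hn ((Nat.even_pow' he.ne').mpr even_two)

theorem sum_range_pow_two_mul (p h : ℕ) :
    ∑ i ∈ range (2 * h), p ^ i = (∑ i ∈ range h, p ^ i) * (p ^ h + 1) := by
  rw [two_mul, sum_range_add, mul_add, mul_one, add_comm]
  simp only [pow_add, ← mul_sum, mul_comm]

theorem coprime_geom_sum_pow_add_one {p n : ℕ} (hp : 1 ≤ p) (hodd : Odd (∑ i ∈ range n, p ^ i)) :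
    Nat.Coprime (∑ i ∈ range n, p ^ i) (p ^ n + 1) := by
  have hgeom := geom_sum_mul_of_one_le hp n
  have hpow := Nat.one_le_pow n p hp
  have h : p ^ n + 1 = (p - 1) * ∑ i ∈ range n, p ^ i + 2 := by rw [mul_comm]; omega
  rwa [h, Nat.coprime_mul_right_add_right, Nat.coprime_two_right]

theorem two_mul_add_one_lt_of_mul_eq_prime_pow {p k g x y : ℕ} (hp : p.Prime)
    (hxy : x * y = p ^ k) (hx : p ^ g < x) (hy : p ^ g < y) : 2 * g + 1 < k := by
  obtain ⟨a, -, rfl⟩ := (Nat.dvd_prime_pow hp).mp (Dvd.intro y hxy)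
  obtain ⟨b, -, rfl⟩ := (Nat.dvd_prime_pow hp).mp (Dvd.intro_left _ hxy)
  rw [Nat.pow_lt_pow_iff_right hp.one_lt] at hx hy
  have hab : a + b = k := Nat.pow_right_injective hp.two_le (by simpa [pow_add] using hxy)
  omega

theorem sigma_one_sq_ne_prime_pow {p k m : ℕ} (hp : p.Prime) (hp_odd : Odd p) (hk : Odd k)
    (hm : Odd m) (hσp : σ 1 (p ^ k) = 2 * m ^ 2) : σ 1 (m ^ 2) ≠ p ^ k := by
  intro hσm
  obtain ⟨g, rfl⟩ := hk
  rcases Nat.eq_zero_or_pos g with rfl | hg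
  · simp only [mul_zero, zero_add, pow_one] at hσp hσm
    refine sigma_one_add_one_ne_two_mul hm.pow (hσm ▸ hp) ?_
    rw [hσm, ← hσp, ← pow_one p, sigma_one_apply_prime_pow hp]
    simp
  set S := ∑ i ∈ range (g + 1), p ^ i with hS
  obtain ⟨B, hB⟩ : 2 ∣ p ^ (g + 1) + 1 := hp_odd.pow.add_one.two_dvd
  have hSB : S * B = m ^ 2 := by
    rw [sigma_one_apply_prime_pow hp, show 2 * g + 1 + 1 = 2 * (g + 1) by ring,
      sum_range_pow_two_mul, ← hS, hB] at hσp
    linarith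
  have hcop : Nat.Coprime S B :=
    (hB ▸ coprime_geom_sum_pow_add_one hp.pos (Nat.odd_mul.mp (hSB ▸ hm.pow)).1).coprime_mul_left_right
  have hS_gt : p ^ g < S := by
    rw [hS, sum_range_succ]
    have : 1 ≤ ∑ i ∈ range g, p ^ i :=
      single_le_sum (f := (p ^ ·)) (fun _ _ ↦ Nat.zero_le _) (mem_range.mpr hg)
    omega
  have hB_gt : p ^ g < B := by
    have := Nat.mul_le_mul_right (p ^ g) hp.two_le
    rw [pow_succ] at hB
    linarith
  have hk_lt := two_mul_add_one_lt_of_mul_eq_prime_pow hp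
    (by rw [← isMultiplicative_sigma.map_mul_of_coprime hcop, hSB, hσm])
    (hS_gt.trans_le (le_sigma_one (by omega))) (hB_gt.trans_le (le_sigma_one (by omega)))
  omega

theorem exists_sigma_one_eq_mul_of_perfect {p k n : ℕ} (hp : p.Prime) (hpn : Nat.Coprime p n)
    (h : Nat.Perfect (p ^ k * n)) : ∃ d, σ 1 n = p ^ k * d ∧ σ 1 (p ^ k) * d = 2 * n := by
  have hpk : 0 < p ^ k := pow_pos hp.pos k
  have hmul : σ 1 (p ^ k) * σ 1 n = p ^ k * (2 * n) := by
    rw [← isMultiplicative_sigma.map_mul_of_coprime (hpn.pow_left k), sigma_one_apply,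
      (Nat.perfect_iff_sum_divisors_eq_two_mul h.2).mp h]
    ring
  obtain ⟨d, hd⟩ : p ^ k ∣ σ 1 n :=
    ((coprime_sigma_one_prime_pow hp k).pow_left k).dvd_of_dvd_mul_left (Dvd.intro _ hmul.symm)
  refine ⟨d, hd, Nat.eq_of_mul_eq_mul_left hpk ?_⟩
  rw [← hmul, hd]
  ring

theorem odd_of_even_mul_eq_two_mul {c d n : ℕ} (hc : Even c) (hn : Odd n) (h : c * d = 2 * n) :
    Odd d := by
  rw [← Nat.not_even_iff_odd]
  rintro ⟨e, rfl⟩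
  obtain ⟨w, rfl⟩ := hc
  have : 2 * n = 2 * (2 * (w * e)) := by rw [← h]; ring
  exact Nat.not_even_iff_odd.mpr hn ⟨w * e, by omega⟩

theorem le_two_div_add_self {x : ℚ} (hx : 3 ≤ x) : 11 / 3 ≤ 2 / x + x := by
  rw [div_add' _ _ _ (by positivity), le_div_iff₀ (by positivity)]
  nlinarith

end

theorem stmt_5 (p k m : ℕ) (hp : p.Prime) (hp4 : p % 4 = 1) (hk4 : k % 4 = 1)
    (hcop : Nat.Coprime p m) (hodd : Odd (p ^ k * m ^ 2))
    (hperf : Nat.Perfect (p ^ k * m ^ 2)) :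
    (ArithmeticFunction.sigma 1 (p ^ k) : ℚ) / (m ^ 2 : ℚ) + (ArithmeticFunction.sigma 1 (m ^ 2) : ℚ) / (p ^ k : ℚ) ≥ 11 / 3 := by
  have hp_odd : Odd p := Nat.odd_iff.mpr (by omega)
  have hk_odd : Odd k := Nat.odd_iff.mpr (by omega)
  have hm_odd : Odd m := (Nat.odd_pow_iff two_ne_zero).mp (Nat.odd_mul.mp hodd).2
  obtain ⟨d, hσm, hσp⟩ := exists_sigma_one_eq_mul_of_perfect hp (hcop.pow_right 2) hperf
  have hd_odd : Odd d :=
    odd_of_even_mul_eq_two_mul (even_sigma_one_prime_pow hp hp_odd hk_odd) hm_odd.pow hσp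
  have hd_ne_one : d ≠ 1 := by
    rintro rfl
    exact sigma_one_sq_ne_prime_pow hp hp_odd hk_odd hm_odd (by simpa using hσp) (by simpa using hσm)
  have hd : (3 : ℚ) ≤ d := by
    obtain ⟨j, rfl⟩ := hd_odd
    exact_mod_cast (by omega : 3 ≤ 2 * j + 1)
  have hm2 : (m : ℚ) ^ 2 ≠ 0 := by simp [hm_odd.pos.ne']
  have hpk : (p : ℚ) ^ k ≠ 0 := by simp [hp.ne_zero]
  have h₁ : (ArithmeticFunction.sigma 1 (p ^ k) : ℚ) / m ^ 2 = 2 / d := by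
    rw [div_eq_div_iff hm2 (by positivity)]
    exact_mod_cast hσp
  have h₂ : (ArithmeticFunction.sigma 1 (m ^ 2) : ℚ) / p ^ k = d := by
    rw [hσm, Nat.cast_mul, Nat.cast_pow, mul_div_cancel_left₀ _ hpk]
  rw [h₁, h₂]
  exact le_two_div_add_self hd
end

section
/- Let N = p^k · m^2 be an odd perfect number, where p is a prime with p ≡ k ≡ 1 (mod 4) and gcd(p, m) = 1. Then σ(p^k)/m ≠ σ(m)/p^k, i.e., p^k · σ(p^k) ≠ m · σ(m). -/
/-!
If `σ(p^k)/m = σ(m)/p^k = x`, then `x² = I(p^k) · I(m)` for the abundancy index `I(n) = σ(n)/n`,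
and `x` is an integer since `p^k ∣ m σ(m)` with `p ∤ m`. But `1 < I(p^k) < 2` for a nontrivial
prime power and `1 ≤ I(m) ≤ 2` for a divisor of a perfect number, so `1 < x² < 4`, which no
integer satisfies.
-/

open ArithmeticFunction
open scoped ArithmeticFunction.sigma

namespace Nat

theorem abundancyIndex_eq_sigma_div (n : ℕ) : n.abundancyIndex = (σ 1 n : ℚ) / n := by
  rw [abundancyIndex, sigma_one_apply, cast_sum]

theorem Perfect.abundancyIndex_eq_two {n : ℕ} (h : n.Perfect) : n.abundancyIndex = 2 := by
  rw [abundancyIndex, div_eq_iff (by exact_mod_cast h.2.ne')]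
  exact_mod_cast (perfect_iff_sum_divisors_eq_two_mul h.2).mp h

theorem Deficient.abundancyIndex_lt_two {n : ℕ} (h : n.Deficient) : n.abundancyIndex < 2 := by
  rw [abundancyIndex, div_lt_iff₀ (by exact_mod_cast h.pos)]
  have hsum := sum_divisors_eq_sum_properDivisors_add_self (n := n)
  rw [Deficient] at h
  exact_mod_cast (by omega : ∑ i ∈ n.divisors, i < 2 * n)

theorem one_le_abundancyIndex {n : ℕ} (hn : n ≠ 0) : 1 ≤ n.abundancyIndex := by
  rw [abundancyIndex, one_le_div (by positivity)]
  exact_mod_cast Finset.single_le_sum (fun i _ => Nat.zero_le i) (mem_divisors_self n hn)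

theorem one_lt_abundancyIndex {n : ℕ} (hn : 1 < n) : 1 < n.abundancyIndex := by
  rw [abundancyIndex, one_lt_div (by positivity), sum_divisors_eq_sum_properDivisors_add_self]
  have hone : 1 ≤ ∑ i ∈ n.properDivisors, i :=
    Finset.single_le_sum (fun i _ => Nat.zero_le i) (one_mem_properDivisors_iff_one_lt.mpr hn)
  exact_mod_cast (by omega : n < ∑ i ∈ n.properDivisors, i + n)

theorem abundancyIndex_le_two_of_dvd_perfect {m n : ℕ} (hn : n.Perfect) (hm : m ∣ n) :
    m.abundancyIndex ≤ 2 :=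
  hn.abundancyIndex_eq_two ▸ abundancyIndex_le_of_dvd hn.2.ne' hm

theorem sigma_div_ne_sigma_div_of_coprime {a b : ℕ} (hab : a.Coprime b)
    (hlo : 1 < a.abundancyIndex * b.abundancyIndex)
    (hhi : a.abundancyIndex * b.abundancyIndex < 4) :
    (σ 1 a : ℚ) / b ≠ (σ 1 b : ℚ) / a := by
  intro heq
  have ha : (a : ℚ) ≠ 0 := by
    rintro h; norm_num [abundancyIndex, cast_eq_zero.mp h] at hlo
  have hb : (b : ℚ) ≠ 0 := by
    rintro h; norm_num [abundancyIndex, cast_eq_zero.mp h] at hlo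
  have hsq : ((σ 1 b : ℚ) / a) ^ 2 = a.abundancyIndex * b.abundancyIndex := by
    rw [abundancyIndex_eq_sigma_div, abundancyIndex_eq_sigma_div, sq]
    nth_rewrite 1 [← heq]
    field_simp
  have hcross : a * σ 1 a = b * σ 1 b := by
    field_simp at heq
    rw [mul_comm]
    exact_mod_cast heq
  obtain ⟨t, ht⟩ : a ∣ σ 1 b := hab.dvd_of_dvd_mul_left ⟨σ 1 a, by rw [← hcross, mul_comm]⟩
  rw [ht, cast_mul, mul_div_cancel_left₀ _ ha] at hsq
  have ht1 : 1 < t ^ 2 := by exact_mod_cast hsq ▸ hlo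
  have ht4 : t ^ 2 < 2 ^ 2 := by exact_mod_cast hsq ▸ hhi
  have ht_lt_two : t < 2 := lt_of_pow_lt_pow_left₀ 2 (Nat.zero_le 2) ht4
  have ht_gt_one : 1 < t := by nlinarith
  omega

end Nat

theorem stmt_7_general (p k m : ℕ) (hp : p.Prime) (hk4 : k % 4 = 1)
    (hcop : Nat.Coprime p m)
    (hperf : Nat.Perfect (p ^ k * m ^ 2)) :
    (ArithmeticFunction.sigma 1 (p ^ k) : ℚ) / (m : ℚ) ≠ (ArithmeticFunction.sigma 1 m : ℚ) / (p ^ k : ℚ) := by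
  have hm : m ≠ 0 := by rintro rfl; simpa using hperf.2
  have hpk_lo : 1 < (p ^ k).abundancyIndex :=
    Nat.one_lt_abundancyIndex (Nat.one_lt_pow (by omega) hp.one_lt)
  have hpk_hi : (p ^ k).abundancyIndex < 2 := hp.deficient_pow.abundancyIndex_lt_two
  have hm_lo : 1 ≤ m.abundancyIndex := Nat.one_le_abundancyIndex hm
  have hm_hi : m.abundancyIndex ≤ 2 :=
    Nat.abundancyIndex_le_two_of_dvd_perfect hperf (Dvd.intro_left (p ^ k * m) (by ring))
  exact_mod_cast Nat.sigma_div_ne_sigma_div_of_coprime (hcop.pow_left k)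
    (by nlinarith) (by nlinarith)

theorem stmt_7 (p k m : ℕ) (hp : p.Prime) (hp4 : p % 4 = 1) (hk4 : k % 4 = 1)
    (hcop : Nat.Coprime p m) (hodd : Odd (p ^ k * m ^ 2))
    (hperf : Nat.Perfect (p ^ k * m ^ 2)) :
    (ArithmeticFunction.sigma 1 (p ^ k) : ℚ) / (m : ℚ) ≠ (ArithmeticFunction.sigma 1 m : ℚ) / (p ^ k : ℚ) :=
  stmt_7_general p k m hp hk4 hcop hperf
end

section
/- Let N = p^k · m^2 be an odd perfect number, where p is a prime with p ≡ k ≡ 1 (mod 4) and gcd(p, m) = 1. If m < σ(p^k) and σ(m)/p^k < σ(p^k)/m, then m < p^k. -/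
/-!
Write `P = p^k`. Since `p ≥ 5`, the geometric sum gives `σ(P) < 5P/4`, and `σ` is
submultiplicative, so `σ(m²) ≤ σ(m)²`. Perfection and coprimality give `σ(P)σ(m²) = 2Pm²`, and the
hypothesis on the ratios reads `σ(m)m < σ(P)P`. Hence
`2Pm⁴ = σ(P)σ(m²)m² ≤ σ(P)(σ(m)m)² < σ(P)³P² < (125/64)P⁵`, so `m⁴ < P⁴`.
-/

open ArithmeticFunction Finset
open scoped ArithmeticFunction.sigma

namespace Nat

theorem sigma_one_mul_le (m n : ℕ) : σ 1 (m * n) ≤ σ 1 m * σ 1 n := by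
  simp only [sigma_one_apply, divisors_mul, Finset.mul_def, sum_mul_sum, ← sum_product']
  exact sum_image_le_of_nonneg fun _ _ => Nat.zero_le _

theorem sigma_one_sq_le (m : ℕ) : σ 1 (m ^ 2) ≤ σ 1 m ^ 2 := by
  simpa only [sq] using sigma_one_mul_le m m

theorem pred_mul_sigma_one_prime_pow_lt {p : ℕ} (hp : p.Prime) (k : ℕ) :
    (p - 1) * σ 1 (p ^ k) < p ^ (k + 1) := by
  have h := geom_sum_mul_add (p - 1) (k + 1)
  rw [Nat.sub_add_cancel hp.one_le] at h
  rw [sigma_one_apply_prime_pow hp]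
  lia

theorem four_mul_sigma_one_prime_pow_lt {p : ℕ} (hp : p.Prime) (hp5 : 5 ≤ p) (k : ℕ) :
    4 * σ 1 (p ^ k) < 5 * p ^ k := by
  have h := pred_mul_sigma_one_prime_pow_lt hp k
  rw [pow_succ] at h
  have : 4 * p ≤ 5 * (p - 1) := by lia
  nlinarith

theorem Perfect.sigma_one_mul_sigma_one {a b : ℕ} (h : Perfect (a * b)) (hab : Coprime a b) :
    σ 1 a * σ 1 b = 2 * (a * b) := by
  rw [← isMultiplicative_sigma.map_mul_of_coprime hab, sigma_one_apply]
  exact (perfect_iff_sum_divisors_eq_two_mul h.2).1 h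

end Nat

theorem lt_of_mul_eq_two_mul_mul_sq {P m S T s : ℕ} (hST : S * T = 2 * (P * m ^ 2))
    (hT : T ≤ s ^ 2) (hs : s * m < S * P) (hS : 4 * S < 5 * P) : m < P := by
  have hS0 : 0 < S := Nat.pos_of_mul_pos_right (Nat.zero_lt_of_lt hs)
  have hP0 : 0 < P := Nat.pos_of_mul_pos_left (Nat.zero_lt_of_lt hs)
  have key : 2 * P * m ^ 4 < S ^ 3 * P ^ 2 :=
    calc 2 * P * m ^ 4 = S * T * m ^ 2 := by rw [hST]; ring
      _ ≤ S * (s * m) ^ 2 := by rw [mul_pow, ← mul_assoc]; gcongr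
      _ < S * (S * P) ^ 2 := by gcongr
      _ = S ^ 3 * P ^ 2 := by ring
  have hS3 : 64 * S ^ 3 < 125 * P ^ 3 := by
    have := Nat.pow_lt_pow_left hS (by norm_num : 3 ≠ 0)
    linarith [show (4 * S) ^ 3 = 64 * S ^ 3 by ring, show (5 * P) ^ 3 = 125 * P ^ 3 by ring]
  have hmP : P * (128 * m ^ 4) < P * (125 * P ^ 4) :=
    calc P * (128 * m ^ 4) = 64 * (2 * P * m ^ 4) := by ring
      _ < 64 * (S ^ 3 * P ^ 2) := by gcongr
      _ = 64 * S ^ 3 * P ^ 2 := by ring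
      _ < 125 * P ^ 3 * P ^ 2 := by gcongr
      _ = P * (125 * P ^ 4) := by ring
  have hP4 := Nat.lt_of_mul_lt_mul_left hmP
  exact lt_of_pow_lt_pow_left₀ 4 (Nat.zero_le _) (by lia)

theorem stmt_11_general (p k m : ℕ) (hp : p.Prime) (hp4 : p % 4 = 1)
    (hcop : Nat.Coprime p m)
    (hperf : Nat.Perfect (p ^ k * m ^ 2))
    (h2 : (ArithmeticFunction.sigma 1 m : ℚ) / (p ^ k : ℚ) < (ArithmeticFunction.sigma 1 (p ^ k) : ℚ) / (m : ℚ)) :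
    m < p ^ k := by
  have hp5 : 5 ≤ p := by have := hp.two_le; lia
  have hm : 0 < m := Nat.pos_of_ne_zero (by rintro rfl; simp at h2)
  have hcross : σ 1 m * m < σ 1 (p ^ k) * p ^ k := by
    rw [div_lt_div_iff₀ (by positivity) (by positivity)] at h2
    exact_mod_cast h2
  exact lt_of_mul_eq_two_mul_mul_sq (hperf.sigma_one_mul_sigma_one (hcop.pow k 2))
    (Nat.sigma_one_sq_le m) hcross (Nat.four_mul_sigma_one_prime_pow_lt hp hp5 k)

theorem stmt_11 (p k m : ℕ) (hp : p.Prime) (hp4 : p % 4 = 1) (hk4 : k % 4 = 1)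
    (hcop : Nat.Coprime p m) (hodd : Odd (p ^ k * m ^ 2))
    (hperf : Nat.Perfect (p ^ k * m ^ 2)) (h1 : m < ArithmeticFunction.sigma 1 (p ^ k))
    (h2 : (ArithmeticFunction.sigma 1 m : ℚ) / (p ^ k : ℚ) < (ArithmeticFunction.sigma 1 (p ^ k) : ℚ) / (m : ℚ)) :
    m < p ^ k :=
  stmt_11_general p k m hp hp4 hcop hperf h2
end
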